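/- arXiv:1810.07138 — 8 statements merged into one kernel-verified Lean document; each statement's English description precedes it below -/
import Mathlib

section
/- For ν ≥ −1/2, the function t ↦ t^{−ν} J_{ν+1}(t) is Lipschitz continuous on [0,∞) with Lipschitz constant 1/(2^{ν+1} Γ(ν+2)): for all u, v ≥ 0, |u^{−ν} J_{ν+1}(u) − v^{−ν} J_{ν+1}(v)| ≤ |u−v| / (2^{ν+1} Γ(ν+2)). -/
open Real

noncomputable def besselJ (ν x : ℝ) : ℝ :=
  ∑' j : ℕ, (-1 : ℝ) ^ j / ((Nat.factorial j : ℝ) * Real.Gamma (ν + 1 + j)) *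
    (x / 2) ^ (2 * (j : ℝ) + ν)

/-!
Put `μ = ν + 1/2` and `P(t) = ∫_{-1}^{1} (1 - s²) ^ μ cos (t s) ds`. Expanding the cosine, the
even moments of `(1 - s²) ^ μ` satisfy a two-term recursion (integration by parts), and comparing
coefficients gives Poisson's integral
`t ^ (-ν) J_{ν+1}(t) = t P(t) / (2 ^ (ν + 1) Γ(ν + 2) P(0))`.
For `μ > 0` a second integration by parts gives
`t P(t) = 2μ ∫ s (1 - s²) ^ (μ - 1) sin (t s) ds`, and
`|sin (u s) - sin (v s)| ≤ |s| |u - v|` bounds the increments of `t P(t)` by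
`|u - v| 2μ ∫ s² (1 - s²) ^ (μ - 1) ds = |u - v| P(0)`. For `μ = 0`, `t P(t) = 2 sin t`.
-/

open MeasureTheory Set intervalIntegral
open scoped Nat

theorem hasDerivAt_one_sub_sq_rpow (μ : ℝ) {s : ℝ} (hs : s ^ 2 < 1) :
    HasDerivAt (fun s : ℝ => (1 - s ^ 2) ^ μ) (-(2 * μ) * (s * (1 - s ^ 2) ^ (μ - 1))) s := by
  have := ((hasDerivAt_pow 2 s).const_sub 1).rpow_const (p := μ) (Or.inl (by linarith))
  convert this using 1
  push_cast
  ring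

theorem continuous_one_sub_sq_rpow {μ : ℝ} (hμ : 0 ≤ μ) :
    Continuous fun s : ℝ => (1 - s ^ 2) ^ μ := by
  fun_prop (disch := assumption)

theorem intervalIntegrable_mul_one_sub_sq_rpow {μ : ℝ} (hμ : 0 < μ) :
    IntervalIntegrable (fun s : ℝ => s * (1 - s ^ 2) ^ (μ - 1)) volume (-1) 1 := by
  have hcont := continuous_one_sub_sq_rpow (μ := μ) hμ.le
  -- `-2μ` times this is the derivative of `(1 - s²) ^ μ`, which has one sign on each half
  have hleft : IntervalIntegrable (fun s : ℝ => -(2 * μ) * (s * (1 - s ^ 2) ^ (μ - 1)))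
      volume (-1) 0 := by
    refine intervalIntegrable_deriv_of_nonneg hcont.continuousOn
      (fun s hs => hasDerivAt_one_sub_sq_rpow μ ?_) fun s hs => ?_
    all_goals norm_num at hs
    · nlinarith [hs.1, hs.2]
    · exact mul_nonneg_of_nonpos_of_nonpos (by linarith) (mul_nonpos_of_nonpos_of_nonneg hs.2.le
        (rpow_nonneg (by nlinarith [hs.1, hs.2]) _))
  have hright : IntervalIntegrable (fun s : ℝ => -(-(2 * μ) * (s * (1 - s ^ 2) ^ (μ - 1))))
      volume 0 1 := by
    refine intervalIntegrable_deriv_of_nonneg hcont.neg.continuousOn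
      (fun s hs => (hasDerivAt_one_sub_sq_rpow μ ?_).neg) fun s hs => ?_
    all_goals norm_num at hs
    · nlinarith [hs.1, hs.2]
    · exact neg_nonneg.2 (mul_nonpos_of_nonpos_of_nonneg (by linarith) (mul_nonneg hs.1.le
        (rpow_nonneg (by nlinarith [hs.1, hs.2]) _)))
  have hboth := hleft.trans (by simpa only [Pi.neg_def, neg_neg] using hright.neg)
  convert hboth.const_mul (-(2 * μ))⁻¹ using 2 with s
  field_simp

theorem integral_one_sub_sq_rpow_mul_deriv {μ : ℝ} (hμ : 0 < μ) {f f' : ℝ → ℝ}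
    (hf : ∀ s, HasDerivAt f (f' s) s) (hf' : IntervalIntegrable f' volume (-1) 1) :
    ∫ s in (-1 : ℝ)..1, (1 - s ^ 2) ^ μ * f' s
      = 2 * μ * ∫ s in (-1 : ℝ)..1, s * (1 - s ^ 2) ^ (μ - 1) * f s := by
  have hfc : Continuous f := continuous_iff_continuousAt.2 fun s => (hf s).continuousAt
  rw [integral_mul_deriv_eq_deriv_mul_of_hasDerivAt
    (continuous_one_sub_sq_rpow hμ.le).continuousOn hfc.continuousOn
    (fun s hs => hasDerivAt_one_sub_sq_rpow μ ?_) (fun s _ => hf s)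
    ((intervalIntegrable_mul_one_sub_sq_rpow hμ).const_mul _) hf']
  · simp only [one_pow, sub_self, zero_rpow hμ.ne', zero_mul, neg_one_sq, mul_assoc,
      intervalIntegral.integral_const_mul]
    ring
  · norm_num at hs
    nlinarith [hs.1, hs.2]

noncomputable def poissonMoment (μ : ℝ) (n : ℕ) : ℝ :=
  ∫ s in (-1 : ℝ)..1, s ^ n * (1 - s ^ 2) ^ μ

theorem intervalIntegrable_pow_mul_one_sub_sq_rpow {μ : ℝ} (hμ : 0 ≤ μ) (n : ℕ) :
    IntervalIntegrable (fun s : ℝ => s ^ n * (1 - s ^ 2) ^ μ) volume (-1) 1 :=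
  ((continuous_pow n).mul (continuous_one_sub_sq_rpow hμ)).intervalIntegrable _ _

theorem poissonMoment_zero_pos {μ : ℝ} (hμ : 0 ≤ μ) : 0 < poissonMoment μ 0 := by
  refine intervalIntegral_pos_of_pos_on (intervalIntegrable_pow_mul_one_sub_sq_rpow hμ 0)
    (fun s hs => ?_) (by norm_num)
  have : 0 < 1 - s ^ 2 := by nlinarith [hs.1, hs.2]
  simpa using rpow_pos_of_pos this μ

theorem poissonMoment_zero_eq_integral {μ : ℝ} (hμ : 0 < μ) :
    poissonMoment μ 0 = 2 * μ * ∫ s in (-1 : ℝ)..1, s * (1 - s ^ 2) ^ (μ - 1) * s := by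
  simpa [poissonMoment] using
    integral_one_sub_sq_rpow_mul_deriv hμ (hasDerivAt_id ·) intervalIntegrable_const

theorem poissonMoment_add_two {μ : ℝ} (hμ : 0 ≤ μ) (n : ℕ) :
    (n + 2 * μ + 3) * poissonMoment μ (n + 2) = (n + 1) * poissonMoment μ n := by
  have hparts := integral_one_sub_sq_rpow_mul_deriv (by linarith : 0 < μ + 1)
    (f := fun s => s ^ (n + 1)) (f' := fun s => (n + 1 : ℝ) * s ^ n)
    (fun s => by simpa using hasDerivAt_pow (n + 1) s)
    ((continuous_const.mul (continuous_pow n)).intervalIntegrable _ _)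
  have hlhs : ∫ s in (-1 : ℝ)..1, (1 - s ^ 2) ^ (μ + 1) * ((n + 1 : ℝ) * s ^ n)
      = (n + 1) * (poissonMoment μ n - poissonMoment μ (n + 2)) := by
    rw [poissonMoment, poissonMoment, ← integral_sub
      (intervalIntegrable_pow_mul_one_sub_sq_rpow hμ n)
      (intervalIntegrable_pow_mul_one_sub_sq_rpow hμ (n + 2)),
      ← intervalIntegral.integral_const_mul]
    refine integral_congr fun s hs => ?_
    have : 0 ≤ 1 - s ^ 2 := by
      rw [uIcc_of_le (by norm_num)] at hs
      nlinarith [hs.1, hs.2]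
    rw [rpow_add_one' this (by linarith)]
    ring
  have hrhs : ∫ s in (-1 : ℝ)..1, s * (1 - s ^ 2) ^ (μ + 1 - 1) * s ^ (n + 1)
      = poissonMoment μ (n + 2) :=
    integral_congr fun s _ => by simp only [add_sub_cancel_right]; ring
  rw [hlhs, hrhs] at hparts
  linarith

theorem poissonMoment_two_mul {μ : ℝ} (hμ : 0 ≤ μ) (k : ℕ) :
    poissonMoment μ (2 * k) * (4 ^ k * k ! * Gamma (μ + 3 / 2 + k))
      = poissonMoment μ 0 * Gamma (μ + 3 / 2) * (2 * k)! := by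
  induction k with
  | zero => simp
  | succ k ih =>
    have hrec := poissonMoment_add_two hμ (2 * k)
    have hΓ : Gamma (μ + 3 / 2 + (k + 1 : ℕ)) = (μ + 3 / 2 + k) * Gamma (μ + 3 / 2 + k) := by
      rw [Nat.cast_succ, ← add_assoc, Gamma_add_one (by positivity)]
    rw [show 2 * (k + 1) = 2 * k + 2 by ring, hΓ, Nat.factorial_succ, Nat.factorial_succ,
      Nat.factorial_succ]
    push_cast at hrec ih ⊢
    linear_combination (2 * 4 ^ k * (k + 1 : ℝ) * k ! * Gamma (μ + 3 / 2 + k)) * hrec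
      + (2 * (k + 1 : ℝ) * (2 * k + 1)) * ih

noncomputable def poissonIntegral (μ t : ℝ) : ℝ :=
  ∫ s in (-1 : ℝ)..1, (1 - s ^ 2) ^ μ * cos (t * s)

theorem hasSum_poissonIntegral {μ : ℝ} (hμ : 0 ≤ μ) (t : ℝ) :
    HasSum (fun k => (-1) ^ k * t ^ (2 * k) / (2 * k)! * poissonMoment μ (2 * k))
      (poissonIntegral μ t) := by
  simp only [poissonMoment, ← intervalIntegral.integral_const_mul]
  refine hasSum_integral_of_dominated_convergence (fun k _ => |t| ^ (2 * k) / (2 * k)!)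
    (fun k => ((continuous_const.mul ((continuous_pow _).mul
      (continuous_one_sub_sq_rpow hμ))).aestronglyMeasurable))
    (fun k => ae_of_all _ fun s hs => ?_) (ae_of_all _ fun s _ => (hasSum_cosh |t|).summable)
    intervalIntegrable_const (ae_of_all _ fun s _ => ?_)
  · rw [uIoc_of_le (by norm_num)] at hs
    have h0 : 0 ≤ 1 - s ^ 2 := by nlinarith [hs.1, hs.2]
    have hs1 : |s| ≤ 1 := abs_le.2 ⟨hs.1.le, hs.2⟩
    rw [norm_mul, norm_mul, norm_div, norm_mul, norm_pow, norm_pow, norm_pow, norm_neg, norm_one,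
      one_pow, one_mul, Real.norm_natCast, Real.norm_eq_abs, Real.norm_eq_abs,
      Real.norm_of_nonneg (rpow_nonneg h0 μ)]
    refine mul_le_of_le_one_right (by positivity) ?_
    exact mul_le_one₀ (pow_le_one₀ (abs_nonneg s) hs1) (rpow_nonneg h0 μ)
      (rpow_le_one h0 (by nlinarith) hμ)
  · rw [mul_comm]
    have := (hasSum_cos (t * s)).mul_right ((1 - s ^ 2) ^ μ)
    simpa only [mul_pow, div_mul_eq_mul_div, mul_assoc] using this

theorem hasDerivAt_sin_const_mul (t s : ℝ) :
    HasDerivAt (fun s => sin (t * s)) (t * cos (t * s)) s := by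
  simpa [mul_comm] using ((hasDerivAt_id s).const_mul t).sin

theorem mul_poissonIntegral_eq {μ : ℝ} (hμ : 0 < μ) (t : ℝ) :
    t * poissonIntegral μ t
      = 2 * μ * ∫ s in (-1 : ℝ)..1, s * (1 - s ^ 2) ^ (μ - 1) * sin (t * s) := by
  rw [← integral_one_sub_sq_rpow_mul_deriv hμ (hasDerivAt_sin_const_mul t)
    ((by fun_prop : Continuous fun s => t * cos (t * s)).intervalIntegrable _ _),
    poissonIntegral, ← intervalIntegral.integral_const_mul]
  exact integral_congr fun s _ => by ring

theorem mul_poissonIntegral_zero (t : ℝ) : t * poissonIntegral 0 t = 2 * sin t := by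
  have := integral_eq_sub_of_hasDerivAt (a := -1) (b := 1)
    (fun s _ => hasDerivAt_sin_const_mul t s)
    ((by fun_prop : Continuous fun s => t * cos (t * s)).intervalIntegrable _ _)
  simp only [poissonIntegral, rpow_zero, one_mul, ← intervalIntegral.integral_const_mul, this]
  simp [two_mul]

theorem abs_mul_poissonIntegral_sub_le {μ : ℝ} (hμ : 0 ≤ μ) (u v : ℝ) :
    |u * poissonIntegral μ u - v * poissonIntegral μ v| ≤ poissonMoment μ 0 * |u - v| := by
  rcases hμ.eq_or_lt with rfl | hμ
  · have hmoment : poissonMoment 0 0 = 2 := by norm_num [poissonMoment]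
    rw [mul_poissonIntegral_zero, mul_poissonIntegral_zero, ← mul_sub, abs_mul, abs_two, hmoment]
    exact mul_le_mul_of_nonneg_left (abs_sin_sub_sin_le u v) zero_le_two
  have hg := intervalIntegrable_mul_one_sub_sq_rpow hμ
  have hsin (t : ℝ) :=
    hg.mul_continuousOn (by fun_prop : Continuous fun s => sin (t * s)).continuousOn
  have hpointwise : ∀ s ∈ Icc (-1 : ℝ) 1,
      |s * (1 - s ^ 2) ^ (μ - 1) * sin (u * s) - s * (1 - s ^ 2) ^ (μ - 1) * sin (v * s)|
        ≤ s * (1 - s ^ 2) ^ (μ - 1) * s * |u - v| := by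
    intro s hs
    have hw : 0 ≤ (1 - s ^ 2) ^ (μ - 1) := rpow_nonneg (by nlinarith [hs.1, hs.2]) _
    have hsin_sub : |sin (u * s) - sin (v * s)| ≤ |u - v| * |s| := by
      simpa [← sub_mul, abs_mul] using abs_sin_sub_sin_le (u * s) (v * s)
    calc _ = |s| * (1 - s ^ 2) ^ (μ - 1) * |sin (u * s) - sin (v * s)| := by
          rw [← mul_sub, abs_mul, abs_mul, abs_of_nonneg hw]
      _ ≤ |s| * (1 - s ^ 2) ^ (μ - 1) * (|u - v| * |s|) := by gcongr
      _ = s * (1 - s ^ 2) ^ (μ - 1) * s * |u - v| := by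
          linear_combination (1 - s ^ 2) ^ (μ - 1) * |u - v| * abs_mul_abs_self s
  rw [mul_poissonIntegral_eq hμ, mul_poissonIntegral_eq hμ, ← mul_sub,
    ← integral_sub (hsin u) (hsin v), poissonMoment_zero_eq_integral hμ, abs_mul,
    abs_of_pos (by positivity), mul_assoc _ (∫ s in (-1 : ℝ)..1, _),
    ← intervalIntegral.integral_mul_const]
  gcongr
  calc _ ≤ _ := abs_integral_le_integral_abs (by norm_num)
    _ ≤ _ := integral_mono_on (by norm_num) ((hsin u).sub (hsin v)).abs
      ((hg.mul_continuousOn continuous_id.continuousOn).mul_const _) hpointwise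

theorem rpow_neg_mul_div_two_rpow {ν t : ℝ} (ht : 0 ≤ t) (j : ℕ) :
    t ^ (-ν) * (t / 2) ^ (2 * (j : ℝ) + (ν + 1))
      = t ^ (2 * j + 1) / (4 ^ j * 2 ^ (ν + 1)) := by
  have hexp : -ν + (2 * (j : ℝ) + (ν + 1)) = (2 * j + 1 : ℕ) := by push_cast; ring
  rw [div_rpow ht zero_le_two, mul_div_assoc', ← rpow_add' ht (by rw [hexp]; positivity), hexp,
    rpow_natCast, rpow_add zero_lt_two, rpow_mul zero_le_two, rpow_natCast]
  norm_num

theorem rpow_neg_mul_besselJ_add_one {ν t : ℝ} (hν : -(1 / 2) ≤ ν) (ht : 0 ≤ t) :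
    t ^ (-ν) * besselJ (ν + 1) t
      = t * poissonIntegral (ν + 1 / 2) t
          / (poissonMoment (ν + 1 / 2) 0 * (2 ^ (ν + 1) * Gamma (ν + 2))) := by
  have hμ : 0 ≤ ν + 1 / 2 := by linarith
  rw [besselJ, ← tsum_mul_left, mul_div_right_comm,
    ← ((hasSum_poissonIntegral hμ t).mul_left _).tsum_eq]
  refine tsum_congr fun j => ?_
  have hcoeff := poissonMoment_two_mul hμ j
  rw [show ν + 1 / 2 + 3 / 2 = ν + 2 by ring] at hcoeff
  rw [mul_left_comm, rpow_neg_mul_div_two_rpow ht, show ν + 1 + 1 + (j : ℝ) = ν + 2 + j by ring]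
  have hΓj : 0 < Gamma (ν + 2 + j) := Gamma_pos_of_pos (by linarith [j.cast_nonneg (α := ℝ)])
  have hΓ : 0 < Gamma (ν + 2) := Gamma_pos_of_pos (by linarith)
  have hm₀ := poissonMoment_zero_pos hμ
  generalize poissonMoment (ν + 1 / 2) 0 = m₀ at *
  generalize poissonMoment (ν + 1 / 2) (2 * j) = m at *
  field_simp
  linear_combination (-t ^ (2 * j + 1)) * hcoeff

/-- For `ν ≥ −1/2`, the function `t ↦ t^{−ν} J_{ν+1}(t)` is Lipschitz on `[0,∞)` with
Lipschitz constant `1/(2^{ν+1} Γ(ν+2))`. -/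
theorem besselJ_lipschitz (ν : ℝ) (hν : -(1/2) ≤ ν) :
    ∀ u v : ℝ, 0 ≤ u → 0 ≤ v →
      |u ^ (-ν) * besselJ (ν + 1) u - v ^ (-ν) * besselJ (ν + 1) v|
        ≤ |u - v| / (2 ^ (ν + 1) * Real.Gamma (ν + 2)) := by
  intro u v hu hv
  have hμ : 0 ≤ ν + 1 / 2 := by linarith
  have hA : 0 < 2 ^ (ν + 1) * Gamma (ν + 2) :=
    mul_pos (rpow_pos_of_pos two_pos _) (Gamma_pos_of_pos (by linarith))
  have hm := poissonMoment_zero_pos hμ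
  rw [rpow_neg_mul_besselJ_add_one hν hu, rpow_neg_mul_besselJ_add_one hν hv, ← sub_div,
    abs_div, abs_of_pos (mul_pos hm hA), ← div_div]
  exact div_le_div_of_nonneg_right
    ((div_le_iff₀' hm).2 (abs_mul_poissonIntegral_sub_le hμ u v)) hA.le
end

section
/- For all t ≥ 0, |J_1(t)| ≤ 2/π. -/
open Real

/-!
Expanding `sin (t sin θ)` in its power series and integrating term by term against `sin θ`,
the Wallis integrals `∫₀^π sin^(2j+2)` reproduce exactly the coefficients of `J₁`, so
`J₁(t) = π⁻¹ ∫₀^π sin (t sin θ) sin θ dθ`. The integrand is bounded by `sin θ`, whose integral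
over `[0, π]` is `2`.
-/

open Nat intervalIntegral

theorem besselJ_natCast_eq_tsum (n : ℕ) (x : ℝ) :
    besselJ n x = ∑' j : ℕ, (-1 : ℝ) ^ j / (j ! * (n + j)! : ℝ) * (x / 2) ^ (2 * j + n) := by
  unfold besselJ
  congr! 3 with j
  · rw [show (n : ℝ) + 1 + j = ((n + j : ℕ) : ℝ) + 1 by push_cast; ring, Gamma_nat_eq_factorial]
  · rw [← rpow_natCast]
    push_cast
    rfl

theorem integral_sin_pow_two_mul_add_two (n : ℕ) :
    ∫ x in 0..π, sin x ^ (2 * n + 2) = π * (2 * n + 1)! / (n ! * (n + 1)! * 2 ^ (2 * n + 1)) := by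
  induction n with
  | zero => simp [integral_sin_sq]
  | succ n ih =>
    rw [show 2 * (n + 1) + 2 = (2 * n + 2) + 2 by ring, integral_sin_pow, ih]
    simp only [sin_zero, sin_pi, zero_pow (succ_ne_zero _), zero_mul, sub_self, zero_div, zero_add]
    rw [show 2 * (n + 1) + 1 = (2 * n + 1) + 2 by ring]
    push_cast [factorial_succ]
    field_simp
    ring

theorem hasSum_integral_sin_mul_sin_mul_sin (t : ℝ) :
    HasSum (fun j : ℕ => (-1) ^ j * t ^ (2 * j + 1) / (2 * j + 1)! * ∫ x in 0..π, sin x ^ (2 * j + 2))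
      (∫ x in 0..π, sin (t * sin x) * sin x) := by
  simp only [← integral_const_mul]
  refine hasSum_integral_of_dominated_convergence (fun j _ => |t| ^ (2 * j + 1) / (2 * j + 1)!)
    (fun j => by fun_prop) (fun j => .of_forall fun x _ => ?_)
    (.of_forall fun _ _ => (hasSum_sinh |t|).summable) intervalIntegrable_const
    (.of_forall fun x _ => ?_)
  · simp only [norm_mul, norm_div, norm_pow, norm_neg, norm_one, one_pow, one_mul,
      Real.norm_eq_abs, Nat.abs_cast]
    exact mul_le_of_le_one_right (by positivity) (pow_le_one₀ (abs_nonneg _) (abs_sin_le_one x))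
  · exact ((Real.hasSum_sin (t * sin x)).mul_right (sin x)).congr_fun fun j => by ring

theorem besselJ_one_eq_integral (t : ℝ) :
    besselJ 1 t = π⁻¹ * ∫ x in 0..π, sin (t * sin x) * sin x := by
  rw [← Nat.cast_one, besselJ_natCast_eq_tsum]
  refine (((hasSum_integral_sin_mul_sin_mul_sin t).mul_left π⁻¹).congr_fun fun j => ?_).tsum_eq
  rw [integral_sin_pow_two_mul_add_two, add_comm 1 j, div_pow]
  have := pi_pos.ne'
  push_cast [factorial_succ]
  field_simp

theorem abs_integral_sin_mul_sin_mul_sin_le_two (t : ℝ) :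
    |∫ x in 0..π, sin (t * sin x) * sin x| ≤ 2 := by
  rw [← Real.norm_eq_abs]
  calc ‖∫ x in 0..π, sin (t * sin x) * sin x‖ ≤ ∫ x in 0..π, sin x := by
        refine norm_integral_le_of_norm_le pi_pos.le (.of_forall fun x hx => ?_)
          (continuous_sin.intervalIntegrable _ _)
        have hsin : 0 ≤ sin x := sin_nonneg_of_nonneg_of_le_pi hx.1.le hx.2
        rw [norm_mul, Real.norm_of_nonneg hsin]
        exact mul_le_of_le_one_left hsin (by simpa using abs_sin_le_one _)
    _ = 2 := by norm_num [integral_sin]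

theorem abs_besselJ_one_le_general (t : ℝ) : |besselJ 1 t| ≤ 2 / π := by
  rw [besselJ_one_eq_integral, abs_mul, abs_of_pos (inv_pos.mpr pi_pos), inv_mul_eq_div,
    div_le_div_iff_of_pos_right pi_pos]
  exact abs_integral_sin_mul_sin_mul_sin_le_two t

/-- For all `t ≥ 0`, `|J_1(t)| ≤ 2/π`. -/
theorem abs_besselJ_one_le (t : ℝ) (ht : 0 ≤ t) : |besselJ 1 t| ≤ 2 / π :=
  abs_besselJ_one_le_general t
end

section
/- For ν ≥ −1/2 and t, x ≥ 0, |(tx)^{−ν/2} J_ν(2√(tx))| ≤ 1/Γ(ν+1), where the left side is interpreted via the power series Σ_{j≥0} (−1)^j (tx)^j/(j! Γ(ν+1+j)). -/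
open Real

/-- The entire Hankel kernel: `hankelKernel ν u = Σ_{j≥0} (−1)^j u^j/(j! Γ(ν+1+j))`,
which equals `u^{−ν/2} J_ν(2√u)` for `u > 0`. -/
noncomputable def hankelKernel (ν u : ℝ) : ℝ :=
  ∑' j : ℕ, (-1 : ℝ) ^ j * u ^ j / ((Nat.factorial j : ℝ) * Real.Gamma (ν + 1 + j))

/-!
For `ν > -1/2` the Beta integral
`1 / Γ(ν+1+n) = ∫₀¹ t^(n-1/2) (1-t)^(ν-1/2) dt / (Γ(n+1/2) Γ(ν+1/2))`
turns the series termwise into Poisson's integral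
`hankelKernel ν u = (√π Γ(ν+1/2))⁻¹ ∫₀¹ cos (2√(ut)) t^(-1/2) (1-t)^(ν-1/2) dt`,
the cosine appearing through `n! Γ(n+1/2) = √π (2n)! / 4ⁿ`. Bounding `|cos|` by `1` leaves
the Beta integral `B(1/2, ν+1/2) = √π Γ(ν+1/2) / Γ(ν+1)`.
For `ν = -1/2` the series is `cos (2√u) / √π` itself.
-/

open MeasureTheory Set Nat

lemma ofReal_rpow_mul_one_sub_rpow {x : ℝ} (hx : x ∈ Icc 0 1) (a b : ℝ) :
    ((x ^ (a - 1) * (1 - x) ^ (b - 1) : ℝ) : ℂ) =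
      (x : ℂ) ^ ((a : ℂ) - 1) * (1 - (x : ℂ)) ^ ((b : ℂ) - 1) := by
  rw [Complex.ofReal_mul, Complex.ofReal_cpow hx.1, Complex.ofReal_cpow (sub_nonneg.mpr hx.2)]
  push_cast
  rfl

lemma betaIntegral_ofReal (a b : ℝ) :
    Complex.betaIntegral a b = ↑(∫ x in (0:ℝ)..1, x ^ (a - 1) * (1 - x) ^ (b - 1)) := by
  rw [Complex.betaIntegral, ← intervalIntegral.integral_ofReal]
  refine intervalIntegral.integral_congr fun x hx => ?_
  rw [uIcc_of_le zero_le_one] at hx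
  exact (ofReal_rpow_mul_one_sub_rpow hx a b).symm

lemma intervalIntegrable_rpow_mul_one_sub_rpow {a b : ℝ} (ha : 0 < a) (hb : 0 < b) :
    IntervalIntegrable (fun x : ℝ => x ^ (a - 1) * (1 - x) ^ (b - 1)) volume 0 1 := by
  refine (Complex.betaIntegral_convergent (u := a) (v := b) (by simpa) (by simpa)).norm.congr
    fun x hx => ?_
  rw [uIoc_of_le zero_le_one] at hx
  have hx' : x ∈ Icc 0 1 := Ioc_subset_Icc_self hx
  show _ = _
  rw [← ofReal_rpow_mul_one_sub_rpow hx', Complex.norm_real, Real.norm_of_nonneg]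
  exact mul_nonneg (rpow_nonneg hx'.1 _) (rpow_nonneg (sub_nonneg.mpr hx'.2) _)

lemma integral_rpow_mul_one_sub_rpow {a b : ℝ} (ha : 0 < a) (hb : 0 < b) :
    ∫ x in (0:ℝ)..1, x ^ (a - 1) * (1 - x) ^ (b - 1) = Gamma a * Gamma b / Gamma (a + b) := by
  have h := Complex.betaIntegral_eq_Gamma_mul_div a b (by simpa) (by simpa)
  rw [betaIntegral_ofReal, ← Complex.ofReal_add, Complex.Gamma_ofReal, Complex.Gamma_ofReal,
    Complex.Gamma_ofReal] at h
  exact_mod_cast h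

lemma factorial_mul_Gamma_nat_add_half (n : ℕ) :
    (n ! : ℝ) * Gamma (n + 1 / 2) = √π * (2 * n)! / 4 ^ n := by
  have h := Gamma_mul_Gamma_add_half (n + 1 / 2)
  have h4 : (2 : ℝ) ^ (1 - ((2 * n : ℕ) + 1 : ℝ)) = (4 ^ n)⁻¹ := by
    rw [show 1 - ((2 * n : ℕ) + 1 : ℝ) = -((2 * n : ℕ) : ℝ) by ring,
      rpow_neg zero_le_two, rpow_natCast, pow_mul]
    norm_num
  rw [add_assoc, add_halves, Gamma_nat_eq_factorial,
    show 2 * ((n : ℝ) + 1 / 2) = ((2 * n : ℕ) : ℝ) + 1 by push_cast; ring,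
    Gamma_nat_eq_factorial, h4] at h
  rw [mul_comm, h]
  ring

lemma pow_div_factorial_mul_Gamma_nat_add_half {u : ℝ} (hu : 0 ≤ u) (n : ℕ) :
    u ^ n / (n ! * Gamma (n + 1 / 2)) = (2 * √u) ^ (2 * n) / (2 * n)! / √π := by
  rw [factorial_mul_Gamma_nat_add_half, pow_mul, mul_pow, sq_sqrt hu]
  field_simp
  ring

lemma hasSum_cos_two_mul_sqrt {u : ℝ} (hu : 0 ≤ u) :
    HasSum (fun n : ℕ => (-1) ^ n * u ^ n / (n ! * Gamma (n + 1 / 2))) (cos (2 * √u) / √π) := by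
  simpa only [mul_div_assoc, ← pow_div_factorial_mul_Gamma_nat_add_half hu]
    using (hasSum_cos (2 * √u)).div_const √π

lemma hasSum_cosh_two_mul_sqrt {u : ℝ} (hu : 0 ≤ u) :
    HasSum (fun n : ℕ => u ^ n / (n ! * Gamma (n + 1 / 2))) (cosh (2 * √u) / √π) := by
  simpa only [← pow_div_factorial_mul_Gamma_nat_add_half hu]
    using (hasSum_cosh (2 * √u)).div_const √π

lemma hankelKernel_neg_half {u : ℝ} (hu : 0 ≤ u) :
    hankelKernel (-(1 / 2)) u = cos (2 * √u) / √π := by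
  rw [hankelKernel, ← (hasSum_cos_two_mul_sqrt hu).tsum_eq]
  congr! 5 with n
  ring

/-- Poisson's weight `(1 - s²)^(ν - 1/2)` of `J_ν`, in the variable `t = s²`. -/
noncomputable def poissonWeight (ν t : ℝ) : ℝ :=
  t ^ (-(1 / 2) : ℝ) * (1 - t) ^ (ν - 1 / 2)

lemma poissonWeight_nonneg (ν : ℝ) {t : ℝ} (ht : t ∈ Icc 0 1) : 0 ≤ poissonWeight ν t :=
  mul_nonneg (rpow_nonneg ht.1 _) (rpow_nonneg (sub_nonneg.mpr ht.2) _)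

lemma intervalIntegrable_poissonWeight {ν : ℝ} (hν : -(1 / 2) < ν) :
    IntervalIntegrable (poissonWeight ν) volume 0 1 := by
  convert intervalIntegrable_rpow_mul_one_sub_rpow (a := 1 / 2) (b := ν + 1 / 2) (by norm_num)
    (by linarith) using 2 with t
  rw [poissonWeight]
  ring_nf

lemma integral_pow_mul_poissonWeight {ν : ℝ} (hν : -(1 / 2) < ν) (n : ℕ) :
    ∫ t in (0:ℝ)..1, t ^ n * poissonWeight ν t =
      Gamma (n + 1 / 2) * Gamma (ν + 1 / 2) / Gamma (ν + 1 + n) := by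
  have hpow : ∀ t ∈ uIcc (0:ℝ) 1, t ^ n * poissonWeight ν t =
      t ^ ((n + 1 / 2 : ℝ) - 1) * (1 - t) ^ ((ν + 1 / 2) - 1) := by
    have hn : (n : ℝ) + -(1 / 2) ≠ 0 := by
      intro h
      have h2 : (2 * n : ℝ) = 1 := by linarith
      norm_cast at h2
      omega
    intro t ht
    rw [uIcc_of_le zero_le_one] at ht
    rw [poissonWeight, ← mul_assoc, ← rpow_natCast, ← rpow_add' ht.1 hn]
    ring_nf
  rw [intervalIntegral.integral_congr hpow,
    integral_rpow_mul_one_sub_rpow (by positivity) (by linarith)]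
  congr 2
  ring

lemma integral_poissonWeight {ν : ℝ} (hν : -(1 / 2) < ν) :
    ∫ t in (0:ℝ)..1, poissonWeight ν t = √π * Gamma (ν + 1 / 2) / Gamma (ν + 1) := by
  have h := integral_pow_mul_poissonWeight hν 0
  simp only [pow_zero, one_mul, Nat.cast_zero, zero_add, add_zero] at h
  rwa [Gamma_one_half_eq] at h

lemma abs_integral_cos_mul_poissonWeight_le {ν : ℝ} (hν : -(1 / 2) < ν) (g : ℝ → ℝ) :
    |∫ t in (0:ℝ)..1, cos (g t) * poissonWeight ν t| ≤
      √π * Gamma (ν + 1 / 2) / Gamma (ν + 1) := by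
  rw [← integral_poissonWeight hν, ← norm_eq_abs]
  refine intervalIntegral.norm_integral_le_of_norm_le zero_le_one (ae_of_all _ fun t ht => ?_)
    (intervalIntegrable_poissonWeight hν)
  have hw := poissonWeight_nonneg ν (Ioc_subset_Icc_self ht)
  rw [norm_mul, norm_of_nonneg hw]
  exact mul_le_of_le_one_left hw (abs_cos_le_one _)

lemma hasSum_integral_mul_poissonWeight {ν u : ℝ} (hν : -(1 / 2) < ν) (hu : 0 ≤ u) :
    HasSum
      (fun n : ℕ => ∫ t in (0:ℝ)..1,
        (-1) ^ n * (u * t) ^ n / (n ! * Gamma (n + 1 / 2)) * poissonWeight ν t)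
      (∫ t in (0:ℝ)..1, cos (2 * √(u * t)) / √π * poissonWeight ν t) := by
  -- dominated convergence, with the `cosh` series as the dominating sum
  refine intervalIntegral.hasSum_integral_of_dominated_convergence
    (fun n t => u ^ n / (n ! * Gamma (n + 1 / 2)) * poissonWeight ν t) (fun n => ?_)
    (fun n => ae_of_all _ fun t ht => ?_)
    (ae_of_all _ fun t _ => (hasSum_cosh_two_mul_sqrt hu).summable.mul_right _) ?_
    (ae_of_all _ fun t ht => ?_)
  · exact Measurable.aestronglyMeasurable (by unfold poissonWeight; fun_prop)
  · rw [uIoc_of_le zero_le_one] at ht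
    have hw := poissonWeight_nonneg ν (Ioc_subset_Icc_self ht)
    have hd : 0 < (n ! : ℝ) * Gamma (n + 1 / 2) := by positivity
    rw [norm_mul, norm_of_nonneg hw, norm_div, norm_mul, norm_pow, norm_neg, norm_one, one_pow,
      one_mul, norm_of_nonneg (pow_nonneg (mul_nonneg hu ht.1.le) n), norm_of_nonneg hd.le]
    gcongr
    · exact mul_nonneg hu ht.1.le
    · exact mul_le_of_le_one_right hu ht.2
  · simp only [tsum_mul_right, (hasSum_cosh_two_mul_sqrt hu).tsum_eq]
    exact (intervalIntegrable_poissonWeight hν).const_mul _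
  · rw [uIoc_of_le zero_le_one] at ht
    exact (hasSum_cos_two_mul_sqrt (mul_nonneg hu ht.1.le)).mul_right _

lemma integral_cos_series_term_mul_poissonWeight {ν : ℝ} (hν : -(1 / 2) < ν) (u : ℝ) (n : ℕ) :
    ∫ t in (0:ℝ)..1, (-1) ^ n * (u * t) ^ n / (n ! * Gamma (n + 1 / 2)) * poissonWeight ν t =
      Gamma (ν + 1 / 2) * ((-1) ^ n * u ^ n / (n ! * Gamma (ν + 1 + n))) := by
  have hΓ : Gamma (n + 1 / 2) ≠ 0 := (Gamma_pos_of_pos (by positivity)).ne'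
  have hfactor (t : ℝ) :
      (-1) ^ n * (u * t) ^ n / (n ! * Gamma (n + 1 / 2)) * poissonWeight ν t =
        (-1) ^ n * u ^ n / (n ! * Gamma (n + 1 / 2)) * (t ^ n * poissonWeight ν t) := by
    ring
  simp_rw [hfactor]
  rw [intervalIntegral.integral_const_mul, integral_pow_mul_poissonWeight hν]
  field_simp

lemma hankelKernel_eq_integral {ν u : ℝ} (hν : -(1 / 2) < ν) (hu : 0 ≤ u) :
    hankelKernel ν u = (√π * Gamma (ν + 1 / 2))⁻¹ *
      ∫ t in (0:ℝ)..1, cos (2 * √(u * t)) * poissonWeight ν t := by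
  have hΓ : Gamma (ν + 1 / 2) ≠ 0 := (Gamma_pos_of_pos (by linarith)).ne'
  have hsum := (hasSum_integral_mul_poissonWeight hν hu).mul_left (Gamma (ν + 1 / 2))⁻¹
  simp only [integral_cos_series_term_mul_poissonWeight hν, inv_mul_cancel_left₀ hΓ] at hsum
  rw [hankelKernel, hsum.tsum_eq]
  simp_rw [div_eq_inv_mul, mul_assoc, intervalIntegral.integral_const_mul, mul_inv]
  ring

/-- For `ν ≥ −1/2` and `t, x ≥ 0`, `|(tx)^{−ν/2} J_ν(2√(tx))| ≤ 1/Γ(ν+1)`,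
with the left side interpreted via the power series. -/
theorem abs_hankelKernel_le (ν t x : ℝ) (hν : -(1/2) ≤ ν) (ht : 0 ≤ t) (hx : 0 ≤ x) :
    |hankelKernel ν (t * x)| ≤ 1 / Real.Gamma (ν + 1) := by
  have hu : 0 ≤ t * x := mul_nonneg ht hx
  rcases hν.eq_or_lt with rfl | hν
  · rw [hankelKernel_neg_half hu, show -(1 / 2) + 1 = (1 / 2 : ℝ) by norm_num, Gamma_one_half_eq,
      abs_div, abs_of_pos (sqrt_pos.mpr pi_pos)]
    gcongr
    exact abs_cos_le_one _
  · have hc : 0 < √π * Gamma (ν + 1 / 2) :=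
      mul_pos (sqrt_pos.mpr pi_pos) (Gamma_pos_of_pos (by linarith))
    rw [hankelKernel_eq_integral hν hu, abs_mul, abs_of_pos (inv_pos.mpr hc)]
    calc _ ≤ (√π * Gamma (ν + 1 / 2))⁻¹ * (√π * Gamma (ν + 1 / 2) / Gamma (ν + 1)) := by
          gcongr
          exact abs_integral_cos_mul_poissonWeight_le hν _
      _ = 1 / Gamma (ν + 1) := by rw [← mul_div_assoc, inv_mul_cancel₀ hc.ne']
end

section
/- If X ~ Gamma(α, λ), then its Hankel transform of order α−1 equals H_{X,α−1}(t) = e^{−t/λ} for all t ≥ 0. -/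
/-!
Expand the kernel as the power series `Σ (−t)^j x^j / (j! Γ(α+j))` and integrate term by term
against the Gamma density; this is legitimate because the absolute series is dominated by
`e^{|t|/λ}`. The `j`-th moment of the density is `Γ(α+j) / (Γ(α) λ^j)`, whose `Γ(α+j)` cancels
the one in the kernel, leaving `Γ(α)⁻¹ Σ (−t/λ)^j / j! = e^{−t/λ} / Γ(α)`.
-/

open MeasureTheory Real Set

lemma hankelKernel_mul_eq_tsum (ν t x : ℝ) :
    hankelKernel ν (t * x) =
      ∑' j : ℕ, (-t) ^ j / ((Nat.factorial j : ℝ) * Gamma (ν + 1 + j)) * x ^ j :=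
  tsum_congr fun j => by rw [neg_pow, mul_pow]; ring

lemma integral_tsum_mul_pow_mul {μ : Measure ℝ} {w : ℝ → ℝ} (a : ℕ → ℝ)
    (hw : ∀ j : ℕ, Integrable (fun x => x ^ j * w x) μ)
    (hsum : Summable fun j : ℕ => ‖a j‖ * ∫ x, ‖x ^ j * w x‖ ∂μ) :
    ∫ x, (∑' j, a j * x ^ j) * w x ∂μ = ∑' j, a j * ∫ x, x ^ j * w x ∂μ := by
  have hF : ∀ j : ℕ, Integrable (fun x => a j * (x ^ j * w x)) μ := fun j => (hw j).const_mul _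
  have hnorm : (fun j : ℕ => ∫ x, ‖a j * (x ^ j * w x)‖ ∂μ)
      = fun j => ‖a j‖ * ∫ x, ‖x ^ j * w x‖ ∂μ := by
    ext j; simp only [norm_mul, integral_const_mul]
  simp_rw [← tsum_mul_right, mul_assoc, ← integral_const_mul]
  exact (integral_tsum_of_summable_integral_norm hF (hnorm ▸ hsum)).symm

lemma integrableOn_rpow_mul_exp_neg_mul {a r : ℝ} (ha : 0 < a) (hr : 0 < r) :
    IntegrableOn (fun x : ℝ => x ^ (a - 1) * exp (-(r * x))) (Ioi 0) := by
  refine (integrableOn_rpow_mul_exp_neg_mul_rpow (p := 1) (s := a - 1) (by linarith) one_pos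
    hr).congr_fun (fun x _ => ?_) measurableSet_Ioi
  simp only [rpow_one, neg_mul]

section GammaDensity

variable {α lam : ℝ}

lemma pow_mul_gammaDensity_eq (j : ℕ) {x : ℝ} (hx : 0 < x) :
    x ^ j * (lam ^ α * x ^ (α - 1) * exp (-(lam * x)) / Gamma α)
      = lam ^ α / Gamma α * (x ^ (α + j - 1) * exp (-(lam * x))) := by
  rw [show α + j - 1 = (α - 1) + j by ring, rpow_add hx, rpow_natCast]
  ring

lemma integrableOn_pow_mul_gammaDensity (hα : 0 < α) (hlam : 0 < lam) (j : ℕ) :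
    IntegrableOn (fun x => x ^ j * (lam ^ α * x ^ (α - 1) * exp (-(lam * x)) / Gamma α))
      (Ioi 0) :=
  IntegrableOn.congr_fun ((integrableOn_rpow_mul_exp_neg_mul (by positivity) hlam).const_mul _)
    (fun _ hx => (pow_mul_gammaDensity_eq j hx).symm) measurableSet_Ioi

lemma integral_pow_mul_gammaDensity (hα : 0 < α) (hlam : 0 < lam) (j : ℕ) :
    ∫ x in Ioi 0, x ^ j * (lam ^ α * x ^ (α - 1) * exp (-(lam * x)) / Gamma α)
      = Gamma (α + j) / (Gamma α * lam ^ j) := by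
  rw [setIntegral_congr_fun measurableSet_Ioi fun _ hx => pow_mul_gammaDensity_eq j hx,
    integral_const_mul, integral_rpow_mul_exp_neg_mul_Ioi (by positivity) hlam,
    one_div, inv_rpow hlam.le, rpow_add hlam, rpow_natCast]
  have : lam ^ α ≠ 0 := (rpow_pos_of_pos hlam α).ne'
  field_simp

lemma integral_norm_pow_mul_gammaDensity (hα : 0 < α) (hlam : 0 < lam) (j : ℕ) :
    ∫ x in Ioi 0, ‖x ^ j * (lam ^ α * x ^ (α - 1) * exp (-(lam * x)) / Gamma α)‖
      = Gamma (α + j) / (Gamma α * lam ^ j) := by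
  rw [← integral_pow_mul_gammaDensity hα hlam j]
  refine setIntegral_congr_fun measurableSet_Ioi fun x (hx : 0 < x) => norm_of_nonneg ?_
  have := rpow_pos_of_pos hlam α
  have := rpow_pos_of_pos hx (α - 1)
  positivity

end GammaDensity

theorem hankel_transform_gamma_order_general (α lam t : ℝ) (hα : 0 < α) (hlam : 0 < lam) :
    Real.Gamma α *
        ∫ x in Ioi (0 : ℝ), hankelKernel (α - 1) (t * x) *
          (lam ^ α * x ^ (α - 1) * Real.exp (-(lam * x)) / Real.Gamma α)
      = Real.exp (-t / lam) := by
  have hΓ : ∀ j : ℕ, Gamma (α + j) ≠ 0 := fun j => (Gamma_pos_of_pos (by positivity)).ne'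
  have hcoeff : ∀ (s : ℝ) (j : ℕ), s ^ j / ((Nat.factorial j : ℝ) * Gamma (α - 1 + 1 + j)) *
      (Gamma (α + j) / (Gamma α * lam ^ j)) = (s / lam) ^ j / (Nat.factorial j : ℝ) / Gamma α := by
    intro s j
    rw [sub_add_cancel, div_pow]
    field_simp [hΓ j]
  have hsum : Summable fun j : ℕ => ‖(-t) ^ j / ((Nat.factorial j : ℝ) * Gamma (α - 1 + 1 + j))‖ *
      ∫ x in Ioi 0, ‖x ^ j * (lam ^ α * x ^ (α - 1) * exp (-(lam * x)) / Gamma α)‖ := by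
    refine ((summable_pow_div_factorial (|t| / lam)).div_const (Gamma α)).congr fun j => ?_
    have hD : 0 < (Nat.factorial j : ℝ) * Gamma (α - 1 + 1 + j) := by
      rw [sub_add_cancel]; positivity
    rw [integral_norm_pow_mul_gammaDensity hα hlam, norm_div, norm_pow, norm_neg,
      norm_of_nonneg hD.le, norm_eq_abs, hcoeff]
  simp_rw [hankelKernel_mul_eq_tsum]
  rw [integral_tsum_mul_pow_mul _ (integrableOn_pow_mul_gammaDensity hα hlam) hsum]
  simp_rw [integral_pow_mul_gammaDensity hα hlam, hcoeff, tsum_div_const]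
  rw [mul_div_cancel₀ _ (Gamma_pos_of_pos hα).ne', exp_eq_exp_ℝ, NormedSpace.exp_eq_tsum_div,
    neg_div]

/-- If `X ~ Gamma(α,λ)`, then its Hankel transform of order `α−1` equals
`H_{X,α−1}(t) = e^{−t/λ}` for all `t ≥ 0`. -/
theorem hankel_transform_gamma_order (α lam t : ℝ) (hα : 0 < α) (hlam : 0 < lam)
    (ht : 0 ≤ t) :
    Real.Gamma α *
        ∫ x in Ioi (0 : ℝ), hankelKernel (α - 1) (t * x) *
          (lam ^ α * x ^ (α - 1) * Real.exp (-(lam * x)) / Real.Gamma α)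
      = Real.exp (-t / lam) :=
  hankel_transform_gamma_order_general α lam t hα hlam
end

section
/- If X ~ Gamma(α,1) with α > 0, then for all t ≥ 0, E[(tX/α)^{1−α/2} J_α(2√(tX/α))] = t e^{−t/α} / Γ(α+1), where the expression inside the expectation is interpreted as (tX/α) · Σ_{j≥0} (−1)^j (tX/α)^j/(j! Γ(α+1+j)). -/
open MeasureTheory Real Set

lemma exp_tsum_aux (x : ℝ) : ∑' n : ℕ, x ^ n / (Nat.factorial n : ℝ) = Real.exp x := by
  rw [Real.exp_eq_exp_ℝ, NormedSpace.exp_eq_tsum_div]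

/-- If `X ~ Gamma(α,1)` with `α > 0`, then for all `t ≥ 0`,
`E[(tX/α)^{1−α/2} J_α(2√(tX/α))] = t e^{−t/α}/Γ(α+1)`, where the expression inside the
expectation is interpreted as `(tX/α) · Σ_{j≥0} (−1)^j (tX/α)^j/(j! Γ(α+1+j))`. -/
theorem gamma_besselJ_expectation (α t : ℝ) (hα : 0 < α) (ht : 0 ≤ t) :
    ∫ x in Ioi (0 : ℝ),
        (t * x / α) * hankelKernel α (t * x / α) * (x ^ (α - 1) * Real.exp (-x) / Real.Gamma α)
      = t * Real.exp (-t / α) / Real.Gamma (α + 1) := by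
  have hα0 : α ≠ 0 := hα.ne'
  have hΓα : 0 < Real.Gamma α := Real.Gamma_pos_of_pos hα
  set c : ℝ := t / α with hc
  have hc0 : 0 ≤ c := div_nonneg ht hα.le
  set C : ℕ → ℝ := fun j =>
    (-1) ^ j * c ^ (j + 1) / ((Nat.factorial j : ℝ) * Real.Gamma (α + 1 + j) * Real.Gamma α)
    with hCdef
  set F : ℕ → ℝ → ℝ := fun j x => C j * (Real.exp (-x) * x ^ (α + j)) with hFdef
  have hpos : ∀ j : ℕ, (0 : ℝ) < α + j + 1 := fun j => by positivity
  have hΓ' : ∀ j : ℕ, (0 : ℝ) < Real.Gamma (α + 1 + j) := fun j => by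
    apply Real.Gamma_pos_of_pos; positivity
  have hfact : ∀ j : ℕ, (0 : ℝ) < (Nat.factorial j : ℝ) := fun j => by positivity
  -- pointwise identity
  have hpt : ∀ x ∈ Ioi (0 : ℝ),
      (t * x / α) * hankelKernel α (t * x / α) * (x ^ (α - 1) * Real.exp (-x) / Real.Gamma α)
        = ∑' j : ℕ, F j x := by
    intro x hx
    have hx : (0 : ℝ) < x := hx
    have hcx : t * x / α = c * x := by rw [hc]; ring
    rw [hcx, hankelKernel, ← tsum_mul_left, ← tsum_mul_right]
    refine tsum_congr fun j => ?_
    have hxp : x ^ (α + j) = x ^ (α - 1) * x ^ (j + 1) := by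
      rw [← Real.rpow_natCast x (j + 1), ← Real.rpow_add hx]
      congr 1; push_cast; ring
    rw [hFdef, hCdef]
    simp only []
    rw [hxp]
    ring
  rw [setIntegral_congr_fun measurableSet_Ioi hpt]
  -- integrability of each term
  have hint : ∀ j : ℕ, IntegrableOn (fun x => Real.exp (-x) * x ^ (α + j)) (Ioi 0) := by
    intro j
    have := Real.GammaIntegral_convergent (hpos j)
    rwa [show α + (j : ℝ) + 1 - 1 = α + j by ring] at this
  have hFint : ∀ j : ℕ, Integrable (F j) (volume.restrict (Ioi 0)) := fun j =>
    ((hint j).const_mul (C j))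
  -- value of each integral
  have hIval : ∀ j : ℕ, ∫ x in Ioi (0 : ℝ), F j x = C j * Real.Gamma (α + j + 1) := by
    intro j
    rw [hFdef]
    simp only []
    rw [integral_const_mul, Real.Gamma_eq_integral (hpos j),
      show α + (j : ℝ) + 1 - 1 = α + j by ring]
  -- norm integrals
  have hnorm : ∀ j : ℕ, ∫ x in Ioi (0 : ℝ), ‖F j x‖ = |C j| * Real.Gamma (α + j + 1) := by
    intro j
    have : ∀ x ∈ Ioi (0 : ℝ), ‖F j x‖ = |C j| * (Real.exp (-x) * x ^ (α + j)) := by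
      intro x hx
      have hx : (0 : ℝ) < x := hx
      rw [hFdef]
      simp only []
      rw [Real.norm_eq_abs, abs_mul, abs_of_nonneg (by positivity : (0:ℝ) ≤ Real.exp (-x) * x ^ (α + j))]
    rw [setIntegral_congr_fun measurableSet_Ioi this, integral_const_mul,
      Real.Gamma_eq_integral (hpos j), show α + (j : ℝ) + 1 - 1 = α + j by ring]
  -- summability of norm integrals
  have hGammaEq : ∀ j : ℕ, Real.Gamma (α + j + 1) = Real.Gamma (α + 1 + j) := by
    intro j; congr 1; ring
  have hsum : Summable fun j : ℕ => ∫ x in Ioi (0 : ℝ), ‖F j x‖ := by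
    apply Summable.congr (f := fun j : ℕ => c / Real.Gamma α * (c ^ j / (Nat.factorial j : ℝ)))
    · exact (Real.summable_pow_div_factorial c).mul_left _
    · intro j
      rw [hnorm j, hGammaEq j, hCdef]
      simp only []
      rw [abs_div, abs_mul, abs_pow, abs_neg, abs_one, one_pow, one_mul,
        abs_of_nonneg (pow_nonneg hc0 _),
        abs_of_nonneg (by positivity : (0:ℝ) ≤ (Nat.factorial j : ℝ) * Real.Gamma (α + 1 + j) * Real.Gamma α)]
      field_simp
      ring
  rw [← integral_tsum_of_summable_integral_norm hFint hsum]
  -- compute the sum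
  have : ∀ j : ℕ, ∫ x in Ioi (0 : ℝ), F j x
      = c / Real.Gamma α * ((-c) ^ j / (Nat.factorial j : ℝ)) := by
    intro j
    rw [hIval j, hGammaEq j, hCdef]
    simp only []
    have h1 : Real.Gamma (α + 1 + j) ≠ 0 := (hΓ' j).ne'
    have h2 : (Nat.factorial j : ℝ) ≠ 0 := (hfact j).ne'
    field_simp
    ring
  rw [tsum_congr this, tsum_mul_left, exp_tsum_aux, Real.Gamma_add_one hα0]
  rw [show -c = -t / α by rw [hc]; ring, hc]
  field_simp
end

section
/- For α ≥ 1/2 and s, t ≥ 0, the covariance kernel K₀(s,t) = Γ(α)(st/α²)^{(1−α)/2} e^{−(s+t)/α} I_{α−1}(2√(st)/α) satisfies 0 ≤ K₀(s,t) ≤ exp(−(√s − √t)²/α) ≤ 1. -/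
open Real

/-- The modified Bessel kernel: `besselIKernel ν u = Σ_{j≥0} u^j/(j! Γ(ν+1+j))`,
equal to `u^{−ν/2} I_ν(2√u)` for `u > 0`. -/
noncomputable def besselIKernel (ν u : ℝ) : ℝ :=
  ∑' j : ℕ, u ^ j / ((Nat.factorial j : ℝ) * Real.Gamma (ν + 1 + j))

lemma gamma_add_nat_eq (α : ℝ) (hα : 0 < α) (j : ℕ) :
    Real.Gamma (α + j) = Real.Gamma α * ∏ i ∈ Finset.range j, (α + i) := by
  induction j with
  | zero => simp
  | succ j ih =>
    have h1 : α + (j + 1 : ℕ) = (α + j) + 1 := by push_cast; ring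
    have h2 : α + (j : ℝ) ≠ 0 := by positivity
    rw [h1, Real.Gamma_add_one h2, ih, Finset.prod_range_succ]
    ring

lemma prod_half_eq (j : ℕ) :
    (4 : ℝ) ^ j * (Nat.factorial j) * ∏ i ∈ Finset.range j, ((i : ℝ) + 1/2)
      = Nat.factorial (2 * j) := by
  induction j with
  | zero => simp
  | succ j ih =>
    have h : 2 * (j + 1) = (2 * j + 1) + 1 := by ring
    rw [h, Nat.factorial_succ, Nat.factorial_succ, Finset.prod_range_succ,
      Nat.factorial_succ]
    push_cast
    linear_combination (4*((j:ℝ)+1)*((j:ℝ)+1/2)) * ih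

lemma cosh_le_exp_self {x : ℝ} (hx : 0 ≤ x) : Real.cosh x ≤ Real.exp x := by
  rw [Real.cosh_eq]
  have : Real.exp (-x) ≤ Real.exp x := Real.exp_le_exp.2 (by linarith)
  linarith

/-- For `α ≥ 1/2` and `s, t ≥ 0`, the kernel
`K₀(s,t) = Γ(α)(st/α²)^{(1−α)/2} e^{−(s+t)/α} I_{α−1}(2√(st)/α)` satisfies
`0 ≤ K₀(s,t) ≤ exp(−(√s−√t)²/α) ≤ 1`. -/
theorem K0_bounds (α s t : ℝ) (hα : 1/2 ≤ α) (hs : 0 ≤ s) (ht : 0 ≤ t) :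
    0 ≤ Real.Gamma α * Real.exp (-(s + t) / α) * besselIKernel (α - 1) (s * t / α ^ 2) ∧
    Real.Gamma α * Real.exp (-(s + t) / α) * besselIKernel (α - 1) (s * t / α ^ 2)
      ≤ Real.exp (-(Real.sqrt s - Real.sqrt t) ^ 2 / α) ∧
    Real.exp (-(Real.sqrt s - Real.sqrt t) ^ 2 / α) ≤ 1 := by
  have hα0 : 0 < α := by linarith
  have hΓ : 0 < Real.Gamma α := Real.Gamma_pos_of_pos hα0
  set u : ℝ := s * t / α ^ 2 with hu
  have hu0 : 0 ≤ u := by positivity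
  set x : ℝ := 2 * Real.sqrt u with hx
  have hx0 : 0 ≤ x := by positivity
  -- each term of the bessel kernel is nonneg
  have hterm_nonneg : ∀ j : ℕ,
      0 ≤ u ^ j / ((Nat.factorial j : ℝ) * Real.Gamma (α - 1 + 1 + j)) := by
    intro j
    have hΓj : 0 < Real.Gamma (α - 1 + 1 + j) := by
      apply Real.Gamma_pos_of_pos; push_cast; linarith [Nat.cast_nonneg (α := ℝ) j]
    positivity
  have hker_nonneg : 0 ≤ besselIKernel (α - 1) u := tsum_nonneg hterm_nonneg
  -- termwise bound: Γ(α) * a_j ≤ x^(2j)/(2j)!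
  have hbound : ∀ j : ℕ,
      Real.Gamma α * (u ^ j / ((Nat.factorial j : ℝ) * Real.Gamma (α - 1 + 1 + j)))
        ≤ x ^ (2 * j) / (Nat.factorial (2 * j) : ℝ) := by
    intro j
    have hΓeq : Real.Gamma (α - 1 + 1 + j)
        = Real.Gamma α * ∏ i ∈ Finset.range j, (α + i) := by
      have : α - 1 + 1 + (j : ℝ) = α + j := by ring
      rw [this, gamma_add_nat_eq α hα0 j]
    have hprod_le : ∏ i ∈ Finset.range j, ((i : ℝ) + 1/2)
        ≤ ∏ i ∈ Finset.range j, (α + i) := by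
      apply Finset.prod_le_prod
      · intro i _; positivity
      · intro i _; linarith [Nat.cast_nonneg (α := ℝ) i]
    have hprodpos : 0 < ∏ i ∈ Finset.range j, ((i : ℝ) + 1/2) :=
      Finset.prod_pos fun i _ => by positivity
    have hx2j : x ^ (2 * j) = 4 ^ j * u ^ j := by
      rw [hx, pow_mul, mul_pow, Real.sq_sqrt hu0, mul_pow]; norm_num
    have hP : 0 < ∏ i ∈ Finset.range j, (α + (i:ℝ)) :=
      Finset.prod_pos fun i _ => by positivity
    have hd1 : 0 < (Nat.factorial j : ℝ) * (Real.Gamma α * ∏ i ∈ Finset.range j, (α + i)) :=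
      mul_pos (by positivity) (mul_pos hΓ hP)
    rw [hΓeq, hx2j, mul_div_assoc']
    rw [div_le_div_iff₀ hd1 (by positivity)]
    have key : (Nat.factorial (2 * j) : ℝ)
        ≤ 4 ^ j * (Nat.factorial j) * ∏ i ∈ Finset.range j, (α + i) := by
      rw [← prod_half_eq j]
      have : (0:ℝ) ≤ 4 ^ j * (Nat.factorial j) := by positivity
      exact mul_le_mul_of_nonneg_left hprod_le this
    calc Real.Gamma α * u ^ j * (Nat.factorial (2*j) : ℝ)
        ≤ Real.Gamma α * u ^ j * (4 ^ j * (Nat.factorial j) * ∏ i ∈ Finset.range j, (α + i)) := by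
          apply mul_le_mul_of_nonneg_left key (by positivity)
      _ = 4 ^ j * u ^ j * ((Nat.factorial j : ℝ) * (Real.Gamma α * ∏ i ∈ Finset.range j, (α + i))) := by
          ring
  -- summability of the majorant: cosh series
  have hcosh : HasSum (fun j : ℕ => x ^ (2 * j) / (Nat.factorial (2 * j) : ℝ)) (Real.cosh x) :=
    Real.hasSum_cosh x
  have hb_summable : Summable (fun j : ℕ => x ^ (2 * j) / (Nat.factorial (2*j) : ℝ)) :=
    hcosh.summable
  have ha_summable : Summable (fun j : ℕ =>
      Real.Gamma α * (u ^ j / ((Nat.factorial j : ℝ) * Real.Gamma (α - 1 + 1 + j)))) :=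
    Summable.of_nonneg_of_le (fun j => by
      have := hterm_nonneg j; positivity) hbound hb_summable
  have hker_summable : Summable (fun j : ℕ =>
      u ^ j / ((Nat.factorial j : ℝ) * Real.Gamma (α - 1 + 1 + j))) := by
    have := ha_summable.div_const (Real.Gamma α)
    simpa [mul_div_assoc, mul_div_cancel_left₀ _ (ne_of_gt hΓ)] using this
  -- Γ(α) * kernel ≤ cosh x ≤ exp x
  have hmain : Real.Gamma α * besselIKernel (α - 1) u ≤ Real.exp x := by
    have h1 : Real.Gamma α * besselIKernel (α - 1) u
        = ∑' j : ℕ, Real.Gamma α * (u ^ j / ((Nat.factorial j : ℝ) * Real.Gamma (α - 1 + 1 + j))) := by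
      rw [besselIKernel, tsum_mul_left]
    rw [h1]
    calc (∑' j : ℕ, Real.Gamma α * (u ^ j / ((Nat.factorial j : ℝ) * Real.Gamma (α - 1 + 1 + j))))
        ≤ ∑' j : ℕ, x ^ (2 * j) / (Nat.factorial (2*j) : ℝ) :=
          Summable.tsum_le_tsum hbound ha_summable hb_summable
      _ = Real.cosh x := hcosh.tsum_eq
      _ ≤ Real.exp x := cosh_le_exp_self hx0
  -- exponent arithmetic
  have hsqrtu : Real.sqrt u = Real.sqrt (s * t) / α := by
    rw [hu, Real.sqrt_div (by positivity), Real.sqrt_sq hα0.le]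
  have hst : Real.sqrt (s * t) = Real.sqrt s * Real.sqrt t := Real.sqrt_mul hs t
  have hexp_eq : Real.exp (-(s + t) / α) * Real.exp x
      = Real.exp (-(Real.sqrt s - Real.sqrt t) ^ 2 / α) := by
    rw [← Real.exp_add]
    congr 1
    have h1 : (Real.sqrt s - Real.sqrt t) ^ 2 = s + t - 2 * Real.sqrt (s * t) := by
      rw [hst]; rw [sub_sq, Real.sq_sqrt hs, Real.sq_sqrt ht]; ring
    rw [h1, hx, hsqrtu]
    field_simp
    ring
  refine ⟨by positivity, ?_, ?_⟩
  · calc Real.Gamma α * Real.exp (-(s + t) / α) * besselIKernel (α - 1) u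
        = Real.exp (-(s + t) / α) * (Real.Gamma α * besselIKernel (α - 1) u) := by ring
      _ ≤ Real.exp (-(s + t) / α) * Real.exp x :=
          mul_le_mul_of_nonneg_left hmain (Real.exp_pos _).le
      _ = Real.exp (-(Real.sqrt s - Real.sqrt t) ^ 2 / α) := hexp_eq
  · rw [Real.exp_le_one_iff]
    apply div_nonpos_of_nonpos_of_nonneg _ hα0.le
    simp [sq_nonneg]
end

section
/- Let α ≥ 1/2, β = √((α+4)/α), b_α = √(1 + α(1−β)/2), and r = b_α⁴. Then r ∈ (0,1), √r satisfies r − (α+2)√r + 1 = 0, and (1−r)/(α√r) = β. -/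
open Real

/-- Let `α ≥ 1/2`, `β = √((α+4)/α)`, `b_α = √(1 + α(1−β)/2)`, `r = b_α⁴`.
Then `r ∈ (0,1)`, `r − (α+2)√r + 1 = 0`, and `(1−r)/(α√r) = β`. -/
theorem r_properties (α β b r : ℝ) (hα : 1/2 ≤ α)
    (hβ : β = Real.sqrt ((α + 4) / α))
    (hb : b = Real.sqrt (1 + α * (1 - β) / 2))
    (hr : r = b ^ 4) :
    r ∈ Set.Ioo (0 : ℝ) 1 ∧ r - (α + 2) * Real.sqrt r + 1 = 0 ∧
      (1 - r) / (α * Real.sqrt r) = β := by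
  have hα0 : 0 < α := by linarith
  have hβ0 : 0 ≤ β := hβ ▸ Real.sqrt_nonneg _
  have hβsq : β ^ 2 = (α + 4) / α := by
    rw [hβ, sq_sqrt] <;> positivity
  have hmul : α * β ^ 2 = α + 4 := by
    rw [hβsq]; field_simp
  have hβsq1 : 1 < β ^ 2 := by
    rw [hβsq, lt_div_iff₀ hα0]; linarith
  have hβ1 : 1 < β := by nlinarith
  have hmul2 : (α * β) ^ 2 = α * (α + 4) := by linear_combination α * hmul
  set s : ℝ := 1 + α * (1 - β) / 2 with hs
  have hspos : 0 < s := by rw [hs]; nlinarith [hmul2, mul_nonneg hα0.le hβ0]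
  have hslt1 : s < 1 := by rw [hs]; nlinarith [mul_pos hα0 (by linarith : (0:ℝ) < β - 1)]
  have hb2 : b ^ 2 = s := by
    rw [hb, sq_sqrt hspos.le]
  have hrs : r = s ^ 2 := by
    rw [hr, show b ^ 4 = (b ^ 2) ^ 2 by ring, hb2]
  have hsr : Real.sqrt r = s := by
    rw [hrs, Real.sqrt_sq hspos.le]
  refine ⟨⟨by nlinarith, by nlinarith⟩, ?_, ?_⟩
  · rw [hsr, hrs]
    linear_combination (α / 4) * hmul
  · rw [hsr, hrs, div_eq_iff (by positivity)]
    linear_combination (α / 4) * hmul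
end

section
/- Let α ≥ 1/2, β = √((α+4)/α), b_α = √(1+α(1−β)/2), ρ_k = α^α b_α^{4k+2α}, and let 𝔏_k(s) = β^{α/2} e^{(1−β)s/2} ℒ_k^{(α−1)}(βs). Then for each k ∈ ℕ₀, ∫_0^∞ e^{−t/α} 𝔏_k(t) dP₀(t) = ((α)_k/k!)^{1/2} β^{α/2} ρ_k. -/
open MeasureTheory Real Set

/-- The generalized Laguerre polynomial `L_n^{(α−1)}(x) = Σ_{k=0}^n ((α+k)_{n−k}/(n−k)!) (−x)^k/k!`. -/
noncomputable def laguerre (α : ℝ) (n : ℕ) (x : ℝ) : ℝ :=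
  ∑ k ∈ Finset.range (n + 1),
    (Real.Gamma (α + n) / Real.Gamma (α + k)) / (Nat.factorial (n - k) : ℝ) *
      (-x) ^ k / (Nat.factorial k : ℝ)

/-- The normalized generalized Laguerre polynomial `ℒ_n^{(α−1)} = √(n!/(α)_n) L_n^{(α−1)}`,
with `(α)_n = Γ(α+n)/Γ(α)`. -/
noncomputable def laguerreN (α : ℝ) (n : ℕ) (x : ℝ) : ℝ :=
  Real.sqrt ((Nat.factorial n : ℝ) / (Real.Gamma (α + n) / Real.Gamma α)) * laguerre α n x

/-!
The weight `e^{-t/α} e^{(1-β)t/2}` merges with the Gamma density into `t^{α-1} e^{-vt}` with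
`v = 1/α + (β+1)/2`, so the integral is a Laplace transform of a Laguerre polynomial.
Integrating termwise against the Gamma integrals and resumming by the binomial theorem gives
`∫₀^∞ t^{α-1} e^{-vt} L_k^{(α-1)}(ct) dt = Γ(α+k)/k! · (1 - c/v)^k · v^{-α}`.
With `s = b² = 1 + α(1-β)/2`, the relation `αβ² = α + 4` yields `1/v = αs` and
`1 - β/v = s²`, which turns this into `α^α b^{4k+2α}`.
-/

lemma rpow_sub_one_mul_pow {t : ℝ} (ht : 0 < t) (a : ℝ) (j : ℕ) :
    t ^ (a - 1) * t ^ j = t ^ (a + j - 1) := by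
  rw [← rpow_natCast, ← rpow_add ht]
  ring_nf

section GammaMoments

variable {a v : ℝ} (ha : 0 < a) (hv : 0 < v)
include ha hv

lemma integrableOn_rpow_mul_exp_neg_mul_mul_pow (j : ℕ) :
    IntegrableOn (fun t : ℝ => t ^ (a - 1) * exp (-(v * t)) * t ^ j) (Ioi 0) := by
  have h := integrableOn_rpow_mul_exp_neg_mul_rpow (s := a + j - 1) (p := 1) (b := v)
    (by linarith [j.cast_nonneg (α := ℝ)]) one_pos hv
  refine h.congr_fun (fun t (ht : 0 < t) => ?_) measurableSet_Ioi
  dsimp only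
  rw [mul_right_comm, rpow_sub_one_mul_pow ht, rpow_one, neg_mul]

lemma integral_rpow_mul_exp_neg_mul_mul_pow (j : ℕ) :
    ∫ t in Ioi (0 : ℝ), t ^ (a - 1) * exp (-(v * t)) * t ^ j = (1 / v) ^ (a + j) * Gamma (a + j) := by
  rw [← integral_rpow_mul_exp_neg_mul_Ioi (by positivity) hv]
  refine setIntegral_congr_fun measurableSet_Ioi fun t (ht : 0 < t) => ?_
  rw [mul_right_comm, rpow_sub_one_mul_pow ht]

theorem integral_rpow_mul_exp_neg_mul_laguerre (k : ℕ) (c : ℝ) :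
    ∫ t in Ioi (0 : ℝ), t ^ (a - 1) * exp (-(v * t)) * laguerre a k (c * t)
      = Gamma (a + k) / k.factorial * (1 - c * v⁻¹) ^ k * (v⁻¹) ^ a := by
  set coeff : ℕ → ℝ := fun j =>
    Gamma (a + k) / Gamma (a + j) / (k - j).factorial * (-c) ^ j / j.factorial
  have hexpand : ∀ t, t ^ (a - 1) * exp (-(v * t)) * laguerre a k (c * t)
      = ∑ j ∈ Finset.range (k + 1), coeff j * (t ^ (a - 1) * exp (-(v * t)) * t ^ j) := by
    intro t
    simp only [laguerre, coeff, Finset.mul_sum, neg_mul_eq_neg_mul, mul_pow]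
    exact Finset.sum_congr rfl fun j _ => by ring
  simp_rw [hexpand]
  rw [integral_finsetSum _ fun j _ =>
    (integrableOn_rpow_mul_exp_neg_mul_mul_pow ha hv j).const_mul _]
  simp_rw [integral_const_mul, integral_rpow_mul_exp_neg_mul_mul_pow ha hv]
  rw [sub_eq_neg_add, add_pow, Finset.mul_sum, Finset.sum_mul]
  refine Finset.sum_congr rfl fun j hj => ?_
  have hjk : j ≤ k := Nat.lt_succ_iff.mp (Finset.mem_range.mp hj)
  have hΓ : Gamma (a + j) ≠ 0 := (Gamma_pos_of_pos (by positivity)).ne'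
  rw [Nat.cast_choose ℝ hjk, rpow_add (by positivity), one_div, rpow_natCast, one_pow]
  simp only [coeff]
  field_simp
  ring

end GammaMoments

section Parameters

variable {α β : ℝ} (hαβ : α * β ^ 2 = α + 4)
include hαβ

lemma one_add_mul_one_sub_div_two_mul_one_add_mul_one_add_div_two :
    (1 + α * (1 - β) / 2) * (1 + α * (1 + β) / 2) = 1 := by
  linear_combination (-α / 4) * hαβ

lemma one_add_mul_one_sub_div_two_pos (hα : 0 < α) (hβ : 0 ≤ β) :
    0 < 1 + α * (1 - β) / 2 :=
  pos_of_mul_pos_left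
    ((one_add_mul_one_sub_div_two_mul_one_add_mul_one_add_div_two hαβ).symm ▸ one_pos)
    (by positivity)

lemma inv_one_div_add_one_add_div_two (hα : α ≠ 0) :
    (1 / α + (β + 1) / 2)⁻¹ = α * (1 + α * (1 - β) / 2) := by
  refine inv_eq_of_mul_eq_one_right ?_
  calc _ = (1 + α * (1 - β) / 2) * (1 + α * (1 + β) / 2) := by field_simp; ring
    _ = 1 := one_add_mul_one_sub_div_two_mul_one_add_mul_one_add_div_two hαβ

lemma one_sub_mul_mul_one_add_mul_one_sub_div_two :
    1 - β * (α * (1 + α * (1 - β) / 2)) = (1 + α * (1 - β) / 2) ^ 2 := by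
  linear_combination (α / 4) * hαβ

end Parameters

lemma sqrt_rpow_four_mul_add_two_mul {s : ℝ} (hs : 0 < s) (k : ℕ) (a : ℝ) :
    √s ^ (4 * (k : ℝ) + 2 * a) = (s ^ 2) ^ k * s ^ a := by
  rw [show 4 * (k : ℝ) + 2 * a = 2 * ((2 * k : ℕ) + a) by push_cast; ring,
    rpow_mul (sqrt_nonneg s), rpow_two, sq_sqrt hs.le, rpow_add hs, rpow_natCast, pow_mul]

/-- With `β = √((α+4)/α)`, `b = √(1+α(1−β)/2)`, `ρ_k = α^α b^{4k+2α}`, and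
`𝔏_k(s) = β^{α/2} e^{(1−β)s/2} ℒ_k^{(α−1)}(βs)`:
`∫₀^∞ e^{−t/α} 𝔏_k(t) dP₀(t) = ((α)_k/k!)^{1/2} β^{α/2} ρ_k`. -/
theorem laguerre_exp_inner_product (α β b ρ : ℝ) (k : ℕ) (hα : 1/2 ≤ α)
    (hβ : β = Real.sqrt ((α + 4) / α))
    (hb : b = Real.sqrt (1 + α * (1 - β) / 2))
    (hρ : ρ = α ^ α * b ^ (4 * (k : ℝ) + 2 * α)) :
    ∫ t in Ioi (0 : ℝ),
        Real.exp (-t / α) * (β ^ (α / 2) * Real.exp ((1 - β) * t / 2) * laguerreN α k (β * t)) *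
          (t ^ (α - 1) * Real.exp (-t) / Real.Gamma α)
      = Real.sqrt ((Real.Gamma (α + k) / Real.Gamma α) / (Nat.factorial k : ℝ)) *
          β ^ (α / 2) * ρ := by
  have hα0 : 0 < α := by linarith
  have hαβ : α * β ^ 2 = α + 4 := by
    rw [hβ, sq_sqrt (by positivity)]
    field_simp
  set s := 1 + α * (1 - β) / 2
  have hβ0 : 0 ≤ β := hβ ▸ sqrt_nonneg _
  have hs : 0 < s := one_add_mul_one_sub_div_two_pos hαβ hα0 hβ0
  set q := Gamma (α + k) / Gamma α / k.factorial
  have hsqrt : √(k.factorial / (Gamma (α + k) / Gamma α)) * q = √q := by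
    rw [← inv_div, sqrt_inv, inv_mul_eq_div, div_sqrt]
  have hexp : ∀ t, exp (-t / α) * exp ((1 - β) * t / 2) * exp (-t)
      = exp (-((1 / α + (β + 1) / 2) * t)) := fun t => by
    rw [← exp_add, ← exp_add]
    ring_nf
  calc _ = β ^ (α / 2) * √(k.factorial / (Gamma (α + k) / Gamma α)) / Gamma α *
        ∫ t in Ioi (0 : ℝ), t ^ (α - 1) * exp (-((1 / α + (β + 1) / 2) * t)) *
          laguerre α k (β * t) := by
        rw [← integral_const_mul]
        congr 1 with t
        rw [← hexp, laguerreN]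
        ring
    _ = _ := by
        rw [integral_rpow_mul_exp_neg_mul_laguerre hα0 (by positivity),
          inv_one_div_add_one_add_div_two hαβ hα0.ne',
          one_sub_mul_mul_one_add_mul_one_sub_div_two hαβ, mul_rpow hα0.le hs.le, hρ, hb,
          sqrt_rpow_four_mul_add_two_mul hs, ← hsqrt]
        ring
end
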